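/- Let $T_1, T_2, \ldots$ be a sequence of bounded operators on $\ell^2$. Then there exist integers $0 = r_1 < r_2 < \cdots$ such that for all $k, i \in \mathbb{N}$ with $k \ge i$, $\|(I - (Q_{k-1} + Q_k + Q_{k+1})) T_i Q_k\| \le 2^{-k}$, where $Q_0 = 0$ and $Q_k$ is the orthogonal projection of $\ell^2$ onto $\ell^2([r_k + 1, r_{k+1}])$. -/

import Mathlib

open scoped ENNReal
noncomputable section
namespace Paper

instance : Fact ((1:ℝ≥0∞) ≤ 2) := ⟨one_le_two⟩

section lpMaps
variable {E : ℕ → Type*} [∀ i, NormedAddCommGroup (E i)] [∀ i, NormedSpace ℂ (E i)]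

/-- Canonical coordinate projection `Q i` from the `ℓᵖ`-direct sum onto `E i`. -/
def lpProj (p : ℝ≥0∞) [Fact (1 ≤ p)] (i : ℕ) : lp E p →L[ℂ] E i :=
  LinearMap.mkContinuous
    { toFun := fun f => f i
      map_add' := fun f g => rfl
      map_smul' := fun c f => rfl }
    1 fun f => by
      have h1 : (1:ℝ≥0∞) ≤ p := Fact.out
      have hp0 : p ≠ 0 := by intro h; rw [h] at h1; simp at h1
      simp only [one_mul]
      exact lp.norm_apply_le_norm hp0 f i

/-- Canonical inclusion `J i` of `E i` into the `ℓᵖ`-direct sum. -/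
def lpIncl (p : ℝ≥0∞) [Fact (1 ≤ p)] (hp : p ≠ ⊤) (i : ℕ) : E i →L[ℂ] lp E p :=
  LinearMap.mkContinuous
    { toFun := fun a => lp.single p i a
      map_add' := fun a b => by
        apply lp.ext; funext j
        by_cases h : j = i
        · subst h
          simp [lp.single_apply_self, lp.coeFn_add]
        · simp [lp.single_apply_ne p i _ h, lp.coeFn_add]
      map_smul' := fun c a => lp.single_smul p i c a }
    1 fun a => by
      have h1 : (1:ℝ≥0∞) ≤ p := Fact.out
      have hp0 : p ≠ 0 := by intro h; rw [h] at h1; simp at h1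
      have hpt : 0 < p.toReal := ENNReal.toReal_pos hp0 hp
      have := lp.norm_single (E := E) (p := p) (lt_of_lt_of_le zero_lt_one h1) i a
      exact le_of_eq (by simpa using this)

end lpMaps

section Fredholm
variable {X Y : Type*} [NormedAddCommGroup X] [NormedSpace ℂ X]
  [NormedAddCommGroup Y] [NormedSpace ℂ Y]

/-- A bounded operator is Fredholm if its kernel is finite dimensional and its range has
finite codimension. -/
def IsFredholm (T : X →L[ℂ] Y) : Prop :=
  FiniteDimensional ℂ (LinearMap.ker (T : X →ₗ[ℂ] Y)) ∧ FiniteDimensional ℂ (Y ⧸ LinearMap.range (T : X →ₗ[ℂ] Y))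

/-- The Fredholm index `dim ker T - codim ran T`. -/
def fredholmIndex (T : X →L[ℂ] Y) : ℤ :=
  (Module.finrank ℂ (LinearMap.ker (T : X →ₗ[ℂ] Y)) : ℤ) - (Module.finrank ℂ (Y ⧸ LinearMap.range (T : X →ₗ[ℂ] Y)) : ℤ)

/-- The essential norm: the distance to the compact operators. -/
def essNorm (T : X →L[ℂ] Y) : ℝ :=
  ⨅ K : {K : X →L[ℂ] Y // IsCompactOperator ⇑K}, ‖T - (K : X →L[ℂ] Y)‖

end Fredholm

/-- The canonical projection of `ℓ²` onto the coordinates in `[r k, r (k+1))`. -/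
def blockProj (r : ℕ → ℕ) (k : ℕ) :
    lp (fun _ : ℕ => ℂ) 2 →L[ℂ] lp (fun _ : ℕ => ℂ) 2 :=
  ∑ i ∈ Finset.Ico (r k) (r (k+1)),
    (lpIncl (E := fun _ : ℕ => ℂ) 2 (by norm_num) i).comp (lpProj 2 i)


/-- `ℓ²(ℕ)`. -/
abbrev L2 := lp (fun _ : ℕ => ℂ) 2

/-- `ℓᵖ(ℕ)`. -/
abbrev Lp (p : ℝ≥0∞) := lp (fun _ : ℕ => ℂ) p

/-- The blocks `ℓ²([r k, r (k+1)))` as abstract finite dimensional Hilbert spaces. -/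
abbrev Eb (r : ℕ → ℕ) : ℕ → Type := fun k => EuclideanSpace ℂ (Fin (r (k+1) - r k))


/-! Write `P n` for the projection onto the first `n` coordinates, so that
`Q k = P (r (k+1)) - P (r k)` and `1 - (Q (k-1) + Q k + Q (k+1)) = (1 - P (r (k+2))) + P (r (k-1))`.
Hence the operator splits as
`(1 - P (r (k+2))) T P (r (k+1)) Q k + P (r (k-1)) T (1 - P (r k)) Q k`.
For fixed `n`, `‖(1 - P N) T P n‖ → 0` as `N → ∞`, since `P n` has finite rank and `P N → 1`
strongly; taking adjoints, also `‖P n T (1 - P N)‖ → 0`. So `r (m+1)` can be chosen recursively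
making both tails at most `2^{-(m+2)}` for `T 0, …, T (m+1)`, and `2^{-(k+3)} + 2^{-(k+1)} ≤ 2^{-k}`. -/

open Finset Filter Topology

def coordProj (s : Finset ℕ) : L2 →L[ℂ] L2 :=
  ∑ i ∈ s, (lpIncl (E := fun _ : ℕ => ℂ) 2 (by norm_num) i).comp (lpProj 2 i)

lemma blockProj_eq_coordProj (r : ℕ → ℕ) (k : ℕ) :
    blockProj r k = coordProj (Ico (r k) (r (k + 1))) := rfl

lemma coordProj_apply (s : Finset ℕ) (x : L2) :
    coordProj s x = ∑ i ∈ s, lp.single 2 i ((x : ℕ → ℂ) i) := by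
  simp only [coordProj, FunLike.coe_sum, Finset.sum_apply,
    ContinuousLinearMap.comp_apply]
  rfl

lemma coordProj_apply_apply (s : Finset ℕ) (x : L2) (j : ℕ) :
    (coordProj s x : ℕ → ℂ) j = if j ∈ s then (x : ℕ → ℂ) j else 0 := by
  simp only [coordProj_apply, lp.coeFn_sum, Finset.sum_apply, lp.single_apply,
    Finset.sum_pi_single]

lemma coordProj_mul (s t : Finset ℕ) : coordProj s * coordProj t = coordProj (s ∩ t) := by
  ext x j
  simp only [mul_apply_eq_comp, coordProj_apply_apply, Finset.mem_inter]
  split_ifs <;> tauto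

lemma coordProj_sub_coordProj {s t : Finset ℕ} (h : t ⊆ s) :
    coordProj s - coordProj t = coordProj (s \ t) := by
  rw [sub_eq_iff_eq_add, coordProj, coordProj, coordProj, Finset.sum_sdiff h]

lemma norm_coordProj_le (s : Finset ℕ) : ‖coordProj s‖ ≤ 1 := by
  refine ContinuousLinearMap.opNorm_le_bound _ zero_le_one fun x => ?_
  have hp : 0 < (2 : ℝ≥0∞).toReal := by norm_num
  rw [one_mul]
  refine lp.norm_le_of_forall_sum_le hp (norm_nonneg x) fun t => ?_
  refine (Finset.sum_le_sum fun j _ => ?_).trans (lp.sum_rpow_le_norm_rpow hp x t)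
  rw [coordProj_apply_apply]
  split_ifs <;> simp

lemma isSelfAdjoint_coordProj (s : Finset ℕ) : IsSelfAdjoint (coordProj s) := by
  rw [ContinuousLinearMap.isSelfAdjoint_iff_isSymmetric]
  intro x y
  simp only [ContinuousLinearMap.coe_coe, coordProj_apply, sum_inner, inner_sum,
    lp.inner_single_left, lp.inner_single_right]

lemma tendsto_coordProj_range (x : L2) :
    Tendsto (fun N => coordProj (range N) x) atTop (𝓝 x) := by
  simpa only [coordProj_apply] using (lp.hasSum_single (by norm_num) x).tendsto_sum_nat

lemma norm_mul_coordProj_le (A : L2 →L[ℂ] L2) (s : Finset ℕ) :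
    ‖A * coordProj s‖ ≤ ∑ j ∈ s, ‖A (lp.single (E := fun _ : ℕ => ℂ) 2 j 1)‖ := by
  refine ContinuousLinearMap.opNorm_le_bound _ (sum_nonneg fun _ _ => norm_nonneg _) fun x => ?_
  have hx : ∀ j, lp.single 2 j ((x : ℕ → ℂ) j) =
      (x : ℕ → ℂ) j • lp.single (E := fun _ : ℕ => ℂ) 2 j 1 := by
    intro j; rw [← lp.single_smul, smul_eq_mul, mul_one]
  rw [mul_apply_eq_comp, coordProj_apply, map_sum, sum_mul]
  refine (norm_sum_le _ _).trans (sum_le_sum fun j _ => ?_)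
  rw [hx, map_smul, norm_smul, mul_comm]
  gcongr
  exact lp.norm_apply_le_norm (by norm_num) x j

lemma tendsto_norm_one_sub_coordProj_range_mul_mul_coordProj (S : L2 →L[ℂ] L2) (s : Finset ℕ) :
    Tendsto (fun N => ‖(1 - coordProj (range N)) * S * coordProj s‖) atTop (𝓝 0) := by
  have htail : ∀ x : L2, Tendsto (fun N => ‖(1 - coordProj (range N)) x‖) atTop (𝓝 0) := by
    intro x
    simpa [sub_apply] using ((tendsto_coordProj_range x).const_sub x).norm
  have hsum := tendsto_finsetSum s fun j _ => htail (S (lp.single (E := fun _ : ℕ => ℂ) 2 j 1))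
  rw [sum_const_zero] at hsum
  exact squeeze_zero (fun _ => norm_nonneg _) (fun N => norm_mul_coordProj_le _ s) hsum

lemma tendsto_norm_coordProj_mul_mul_one_sub_coordProj_range (S : L2 →L[ℂ] L2) (s : Finset ℕ) :
    Tendsto (fun N => ‖coordProj s * S * (1 - coordProj (range N))‖) atTop (𝓝 0) := by
  have hstar : ∀ N, star ((1 - coordProj (range N)) * star S * coordProj s)
      = coordProj s * S * (1 - coordProj (range N)) := by
    intro N
    simp only [star_mul, star_star, star_sub, star_one, (isSelfAdjoint_coordProj _).star_eq,
      mul_assoc]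
  refine (tendsto_norm_one_sub_coordProj_range_mul_mul_coordProj (star S) s).congr fun N => ?_
  rw [← hstar]; exact (norm_star _).symm

lemma exists_gt_forall_norm_tail_le (T : ℕ → (L2 →L[ℂ] L2)) (n a : ℕ) {ε : ℝ} (hε : 0 < ε) :
    ∃ b, a < b ∧ ∀ i ≤ n,
      ‖(1 - coordProj (range b)) * T i * coordProj (range a)‖ ≤ ε ∧
      ‖coordProj (range a) * T i * (1 - coordProj (range b))‖ ≤ ε := by
  have hsmall : ∀ᶠ b in atTop, ∀ i ∈ range (n + 1),
      ‖(1 - coordProj (range b)) * T i * coordProj (range a)‖ ≤ ε ∧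
      ‖coordProj (range a) * T i * (1 - coordProj (range b))‖ ≤ ε := by
    refine (eventually_all_finset _).2 fun i _ => .and ?_ ?_
    · exact (tendsto_norm_one_sub_coordProj_range_mul_mul_coordProj (T i) _).eventually_le_const hε
    · exact (tendsto_norm_coordProj_mul_mul_one_sub_coordProj_range (T i) _).eventually_le_const hε
  obtain ⟨b, hb, hab⟩ := (hsmall.and (eventually_gt_atTop a)).exists
  exact ⟨b, hab, fun i hi => hb i (mem_range.2 (Nat.lt_succ_of_le hi))⟩

lemma exists_strictMono_of_forall_exists_gt {p : ℕ → ℕ → ℕ → Prop}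
    (h : ∀ m a, ∃ b, a < b ∧ p m a b) :
    ∃ r : ℕ → ℕ, r 0 = 0 ∧ StrictMono r ∧ ∀ m, p m (r m) (r (m + 1)) := by
  choose f hlt hp using h
  let r : ℕ → ℕ := fun n => Nat.rec 0 f n
  exact ⟨r, rfl, strictMono_nat_of_lt_succ fun m => hlt m (r m), fun m => hp m (r m)⟩

lemma coordProj_range_mul_coordProj_range (m n : ℕ) :
    coordProj (range m) * coordProj (range n) = coordProj (range (min m n)) := by
  rw [coordProj_mul, range_inter_range]

lemma coordProj_range_sub_coordProj_range {m n : ℕ} (h : m ≤ n) :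
    coordProj (range n) - coordProj (range m) = coordProj (Ico m n) := by
  rw [coordProj_sub_coordProj (range_subset_range.2 h)]
  refine congrArg coordProj (Finset.ext fun j => ?_)
  simp only [Finset.mem_sdiff, Finset.mem_range, Finset.mem_Ico, not_lt, and_comm]

lemma norm_one_sub_band_mul_mul_coordProj_Ico_le (S : L2 →L[ℂ] L2) {a b c d : ℕ}
    (hbc : b ≤ c) :
    ‖(1 - (coordProj (range d) - coordProj (range a))) * S * coordProj (Ico b c)‖ ≤
      ‖(1 - coordProj (range d)) * S * coordProj (range c)‖ +
      ‖coordProj (range a) * S * (1 - coordProj (range b))‖ := by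
  set P : ℕ → L2 →L[ℂ] L2 := fun n => coordProj (range n)
  set Q := coordProj (Ico b c)
  have hQ : Q = P c - P b := (coordProj_range_sub_coordProj_range hbc).symm
  have hcQ : P c * Q = Q := by
    simp only [hQ, P, mul_sub, coordProj_range_mul_coordProj_range, min_self, min_eq_right hbc]
  have hbQ : (1 - P b) * Q = Q := by
    simp only [hQ, P, sub_mul, mul_sub, one_mul, coordProj_range_mul_coordProj_range, min_self,
      min_eq_left hbc]
    abel
  have hsplit : (1 - (P d - P a)) * S * Q =
      (1 - P d) * S * P c * Q + P a * S * (1 - P b) * Q := by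
    rw [mul_assoc _ (P c), hcQ, mul_assoc _ (1 - P b), hbQ]
    noncomm_ring
  calc ‖(1 - (P d - P a)) * S * Q‖
      ≤ ‖(1 - P d) * S * P c‖ * ‖Q‖ + ‖P a * S * (1 - P b)‖ * ‖Q‖ := by
        rw [hsplit]
        exact (norm_add_le _ _).trans (add_le_add (norm_mul_le _ _) (norm_mul_le _ _))
    _ ≤ ‖(1 - P d) * S * P c‖ + ‖P a * S * (1 - P b)‖ := by
        have hQ1 := norm_coordProj_le (Ico b c)
        gcongr <;> exact mul_le_of_le_one_right (norm_nonneg _) hQ1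

lemma blockProj_eq_sub {r : ℕ → ℕ} (hr : Monotone r) (k : ℕ) :
    blockProj r k = coordProj (range (r (k + 1))) - coordProj (range (r k)) :=
  (coordProj_range_sub_coordProj_range (hr k.le_succ)).symm

/-- At `k = 0` the missing block `Q (k - 1)` is matched by the truncated subtraction `k - 1 = 0`. -/
lemma blockProj_pred_add_blockProj_add_blockProj_succ {r : ℕ → ℕ} (hr : Monotone r) (k : ℕ) :
    (if k = 0 then 0 else blockProj r (k - 1)) + blockProj r k + blockProj r (k + 1) =
      coordProj (range (r (k + 2))) - coordProj (range (r (k - 1))) := by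
  rcases k with _ | k
  · simp only [if_pos, blockProj_eq_sub hr]
    abel
  · simp only [Nat.add_one_ne_zero, if_false, Nat.add_sub_cancel, blockProj_eq_sub hr]
    abel

theorem statement_3 (T : ℕ → (L2 →L[ℂ] L2)) :
    ∃ r : ℕ → ℕ, r 0 = 0 ∧ StrictMono r ∧
      ∀ k i : ℕ, i ≤ k →
        ‖(1 - ((if k = 0 then 0 else blockProj r (k - 1)) + blockProj r k +
            blockProj r (k + 1))).comp ((T i).comp (blockProj r k))‖ ≤ (1 / 2 : ℝ) ^ k := by
  obtain ⟨r, hr0, hr, hsmall⟩ := exists_strictMono_of_forall_exists_gt fun m a =>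
    exists_gt_forall_norm_tail_le T (m + 1) a (pow_pos (one_half_pos (α := ℝ)) (m + 2))
  refine ⟨r, hr0, hr, fun k i hik => ?_⟩
  have hleft : ‖coordProj (range (r (k - 1))) * T i * (1 - coordProj (range (r k)))‖ ≤
      (1 / 2 : ℝ) ^ (k + 1) := by
    rcases k with _ | k
    · simp [hr0, coordProj]
    · exact (hsmall k i (by omega)).2
  calc _ = ‖(1 - (coordProj (range (r (k + 2))) - coordProj (range (r (k - 1))))) * T i *
          coordProj (Ico (r k) (r (k + 1)))‖ := by
        rw [blockProj_pred_add_blockProj_add_blockProj_succ hr.monotone, blockProj_eq_coordProj,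
          mul_assoc]
        rfl
    _ ≤ (1 / 2 : ℝ) ^ (k + 3) + (1 / 2) ^ (k + 1) :=
        (norm_one_sub_band_mul_mul_coordProj_Ico_le _ (hr.monotone k.le_succ)).trans
          (add_le_add (hsmall (k + 1) i (by omega)).1 hleft)
    _ ≤ (1 / 2) ^ k := by
        rw [pow_add, pow_add]
        nlinarith [pow_pos (one_half_pos (α := ℝ)) k]

end Paper
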